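/- Fix an integer n ≥ 1 and define the sequence a : ℕ → ℝ by a_m := sup{ 2^{−j−n(i+2)²} : i, j ∈ ℕ, j ≤ i, m < 2^{j+n(i+2)²} } (the supremum of a nonempty bounded set of reals). Then: (i) m · a_m ≤ 1 for every m ≥ 0; (ii) Σ_{l=0}^m a_l ≤ (2/n) · log(2+m) for every m ≥ 0. -/

import Mathlib

open scoped BigOperators

/-- The singular value sequence of the operator `A_n`:
`a_m = sup { 2^{-j-n(i+2)²} : i, j ∈ ℕ, j ≤ i, m < 2^{j+n(i+2)²} }`. -/
noncomputable def aSeq (n : ℕ) (m : ℕ) : ℝ :=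
  sSup {r : ℝ | ∃ i j : ℕ, j ≤ i ∧ m < 2 ^ (j + n * (i + 2) ^ 2) ∧
    r = ((2 : ℝ) ^ (j + n * (i + 2) ^ 2))⁻¹}

/-!
Write `a_m = 2^{-K(m)}`, where `K(m)` is the least exponent `k = j + n(i+2)²` (`j ≤ i`) with
`m < 2^k`; part (i) is then immediate. For (ii), the indices `l` with `K(l) = k` all lie below
`2^k`, so together they contribute at most `1`, and the sum is bounded by the number of
exponents up to `K(m)`. If `K(m)` lies in the block `i₀`, there are at most `(i₀+1)²` of them,
while `m` has already passed the whole block `i₀ - 1`, so `log(2+m) ≥ n(i₀+1)² log 2`. Below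
`2^{2n}` this count is too crude, and the bound `a_l ≤ 2^{-4n}` is used instead.
-/

open Finset

section FirstExponent

noncomputable def firstExp (E : Set ℕ) (m : ℕ) : ℕ := sInf {k | k ∈ E ∧ m < 2 ^ k}

variable {E : Set ℕ}

lemma firstExp_spec (hE : ∀ m, ∃ k ∈ E, m < 2 ^ k) (m : ℕ) :
    firstExp E m ∈ E ∧ m < 2 ^ firstExp E m :=
  Nat.sInf_mem (hE m)

lemma firstExp_le {m k : ℕ} (hk : k ∈ E) (hm : m < 2 ^ k) : firstExp E m ≤ k :=
  Nat.sInf_le ⟨hk, hm⟩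

lemma two_pow_le_of_lt_firstExp {m k : ℕ} (hk : k ∈ E) (hlt : k < firstExp E m) : 2 ^ k ≤ m :=
  not_lt.1 fun hm => (firstExp_le hk hm).not_gt hlt

lemma firstExp_mono (hE : ∀ m, ∃ k ∈ E, m < 2 ^ k) : Monotone (firstExp E) := fun _ m hlm =>
  firstExp_le (firstExp_spec hE m).1 (hlm.trans_lt (firstExp_spec hE m).2)

lemma sSup_inv_two_pow_eq (hE : ∀ m, ∃ k ∈ E, m < 2 ^ k) (m : ℕ) :
    sSup {r : ℝ | ∃ k ∈ E, m < 2 ^ k ∧ r = ((2 : ℝ) ^ k)⁻¹} =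
      ((2 : ℝ) ^ firstExp E m)⁻¹ := by
  refine IsGreatest.csSup_eq ⟨⟨_, (firstExp_spec hE m).1, (firstExp_spec hE m).2, rfl⟩, ?_⟩
  rintro r ⟨k, hk, hm, rfl⟩
  exact inv_anti₀ (by positivity) (pow_le_pow_right₀ one_le_two (firstExp_le hk hm))

end FirstExponent

lemma sum_inv_le_card_image (s : Finset ℕ) (φ : ℕ → ℕ) (hφ : ∀ l ∈ s, l < φ l) :
    ∑ l ∈ s, ((φ l : ℝ))⁻¹ ≤ #(s.image φ) := by
  rw [← sum_fiberwise_of_maps_to (fun l hl => mem_image_of_mem φ hl), card_eq_sum_ones,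
    Nat.cast_sum, Nat.cast_one]
  refine sum_le_sum fun v _ => ?_
  have hfiber : #{l ∈ s | φ l = v} ≤ v :=
    (card_le_card fun l hl => by
      rw [mem_filter] at hl
      exact mem_range.2 (hl.2 ▸ hφ l hl.1)).trans_eq (card_range v)
  calc ∑ l ∈ s with φ l = v, ((φ l : ℝ))⁻¹ = #{l ∈ s | φ l = v} * (v : ℝ)⁻¹ := by
        rw [sum_congr rfl fun l hl => by rw [(mem_filter.1 hl).2], sum_const, nsmul_eq_mul]
    _ ≤ 1 := by
        rcases Nat.eq_zero_or_pos v with rfl | hv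
        · simp
        · rw [← div_eq_mul_inv, div_le_one (by positivity)]
          exact_mod_cast hfiber

lemma le_two_mul_log_of_two_pow_le {N : ℕ} {x : ℝ} (h : 2 ^ N ≤ x) :
    (N : ℝ) ≤ 2 * Real.log x := by
  have hlog : N * Real.log 2 ≤ Real.log x := by
    rw [← Real.log_pow]
    exact Real.log_le_log (by positivity) h
  nlinarith [Real.log_two_gt_d9, N.cast_nonneg (α := ℝ)]

def expSet (n : ℕ) : Set ℕ := {k | ∃ i j, j ≤ i ∧ k = j + n * (i + 2) ^ 2}

lemma exists_mem_expSet_lt_two_pow (n m : ℕ) : ∃ k ∈ expSet n, m < 2 ^ k :=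
  ⟨m + n * (m + 2) ^ 2, ⟨m, m, le_rfl, rfl⟩,
    m.lt_two_pow_self.trans_le (Nat.pow_le_pow_right two_pos (Nat.le_add_right _ _))⟩

lemma four_mul_le_of_mem_expSet {n k : ℕ} (hk : k ∈ expSet n) : 4 * n ≤ k := by
  obtain ⟨i, j, -, rfl⟩ := hk
  have : n * 2 ^ 2 ≤ n * (i + 2) ^ 2 := Nat.mul_le_mul_left n (Nat.pow_le_pow_left (by omega) 2)
  omega

lemma le_of_add_mul_sq_le {n i j i₀ j₀ : ℕ} (hn : 1 ≤ n) (hj₀ : j₀ ≤ i₀)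
    (h : j + n * (i + 2) ^ 2 ≤ j₀ + n * (i₀ + 2) ^ 2) : i ≤ i₀ := by
  by_contra! hi
  have : n * (i₀ + 3) ^ 2 ≤ n * (i + 2) ^ 2 :=
    Nat.mul_le_mul_left n (Nat.pow_le_pow_left (by omega) 2)
  nlinarith

lemma aSeq_eq (n m : ℕ) : aSeq n m = ((2 : ℝ) ^ firstExp (expSet n) m)⁻¹ := by
  rw [← sSup_inv_two_pow_eq (exists_mem_expSet_lt_two_pow n), aSeq]
  congr 1
  ext r
  constructor
  · rintro ⟨i, j, hji, hm, rfl⟩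
    exact ⟨_, ⟨i, j, hji, rfl⟩, hm, rfl⟩
  · rintro ⟨_, ⟨i, j, hji, rfl⟩, hm, rfl⟩
    exact ⟨i, j, hji, hm, rfl⟩

lemma mul_aSeq_le_one (n m : ℕ) : (m : ℝ) * aSeq n m ≤ 1 := by
  have hm : (m : ℝ) ≤ 2 ^ firstExp (expSet n) m := by
    exact_mod_cast (firstExp_spec (exists_mem_expSet_lt_two_pow n) m).2.le
  rw [aSeq_eq, ← div_eq_mul_inv]
  exact div_le_one_of_le₀ hm (by positivity)

lemma aSeq_le_inv_two_pow (n m : ℕ) : aSeq n m ≤ ((2 : ℝ) ^ (4 * n))⁻¹ := by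
  rw [aSeq_eq]
  exact inv_anti₀ (by positivity) (pow_le_pow_right₀ one_le_two
    (four_mul_le_of_mem_expSet (firstExp_spec (exists_mem_expSet_lt_two_pow n) m).1))

lemma sum_aSeq_le_sq {n m i₀ j₀ : ℕ} (hn : 1 ≤ n) (hj₀ : j₀ ≤ i₀)
    (hK : firstExp (expSet n) m = j₀ + n * (i₀ + 2) ^ 2) :
    ∑ l ∈ range (m + 1), aSeq n l ≤ (i₀ + 1) ^ 2 := by
  have hE := exists_mem_expSet_lt_two_pow n
  have hsum := sum_inv_le_card_image (range (m + 1)) (fun l => 2 ^ firstExp (expSet n) l)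
    fun l _ => (firstExp_spec hE l).2
  push_cast at hsum
  simp_rw [aSeq_eq]
  refine hsum.trans ?_
  have himage : (range (m + 1)).image (fun l => 2 ^ firstExp (expSet n) l) ⊆
      (range (i₀ + 1) ×ˢ range (i₀ + 1)).image (fun p => 2 ^ (p.2 + n * (p.1 + 2) ^ 2)) := by
    intro v hv
    obtain ⟨l, hl, rfl⟩ := mem_image.1 hv
    obtain ⟨i, j, hji, hKl⟩ := (firstExp_spec hE l).1
    have hle : firstExp (expSet n) l ≤ firstExp (expSet n) m :=
      firstExp_mono hE (Nat.lt_succ_iff.1 (mem_range.1 hl))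
    have hi : i ≤ i₀ := le_of_add_mul_sq_le hn hj₀ (hKl ▸ hK ▸ hle)
    exact mem_image.2 ⟨(i, j), mem_product.2 ⟨mem_range.2 (by omega), mem_range.2 (by omega)⟩,
      by rw [hKl]⟩
  have hcard := (card_le_card himage).trans card_image_le
  rw [card_product, card_range, ← sq] at hcard
  exact_mod_cast hcard

lemma two_pow_le_add_two {n m i₀ j₀ : ℕ} (hn : 1 ≤ n) (hm : 2 ^ (2 * n) ≤ m + 1)
    (hK : firstExp (expSet n) m = j₀ + n * (i₀ + 2) ^ 2) :
    2 ^ (n * (i₀ + 1) ^ 2) ≤ m + 2 := by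
  rcases i₀ with _ | i
  · have : 2 ^ n ≤ 2 ^ (2 * n) := Nat.pow_le_pow_right two_pos (by omega)
    simp only [zero_add, one_pow, mul_one]
    omega
  · -- the last exponent of the previous block
    have hprev : i + n * (i + 2) ^ 2 < firstExp (expSet n) m := by
      rw [hK]
      nlinarith
    calc 2 ^ (n * (i + 1 + 1) ^ 2) ≤ 2 ^ (i + n * (i + 2) ^ 2) :=
          Nat.pow_le_pow_right two_pos (Nat.le_add_left _ _)
      _ ≤ m := two_pow_le_of_lt_firstExp (E := expSet n) ⟨i, i, le_rfl, rfl⟩ hprev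
      _ ≤ m + 2 := Nat.le_add_right m 2

lemma mul_sum_aSeq_le_one {n m : ℕ} (hm : m + 1 ≤ 2 ^ (2 * n)) :
    n * ∑ l ∈ range (m + 1), aSeq n l ≤ 1 := by
  have hsum : ∑ l ∈ range (m + 1), aSeq n l ≤ (m + 1) * ((2 : ℝ) ^ (4 * n))⁻¹ := by
    simpa using sum_le_card_nsmul (range (m + 1)) _ _ fun l _ => aSeq_le_inv_two_pow n l
  have hmn : n * (m + 1) ≤ 2 ^ (4 * n) :=
    calc n * (m + 1) ≤ 2 ^ (2 * n) * 2 ^ (2 * n) :=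
          Nat.mul_le_mul (n.lt_two_pow_self.le.trans (Nat.pow_le_pow_right two_pos (by omega))) hm
      _ = 2 ^ (4 * n) := by rw [← pow_add]; ring_nf
  calc n * ∑ l ∈ range (m + 1), aSeq n l
        ≤ n * ((m + 1) * ((2 : ℝ) ^ (4 * n))⁻¹) := by gcongr
    _ = (n * (m + 1) : ℕ) / (2 ^ (4 * n) : ℕ) := by push_cast; ring
    _ ≤ 1 := div_le_one_of_le₀ (by exact_mod_cast hmn) (by positivity)

theorem stmt_13 (n : ℕ) (hn : 1 ≤ n) :
    (∀ m : ℕ, (m : ℝ) * aSeq n m ≤ 1) ∧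
    (∀ m : ℕ, ∑ l ∈ Finset.range (m + 1), aSeq n l ≤
      (2 / (n : ℝ)) * Real.log (2 + (m : ℝ))) := by
  refine ⟨mul_aSeq_le_one n, fun m => ?_⟩
  rw [div_mul_eq_mul_div, le_div_iff₀ (by exact_mod_cast hn), mul_comm]
  rcases le_or_gt (m + 1) (2 ^ (2 * n)) with hsmall | hlarge
  · have hlog : (1 : ℝ) ≤ 2 * Real.log (2 + m) := by
      exact_mod_cast le_two_mul_log_of_two_pow_le (N := 1) (by simp)
    exact (mul_sum_aSeq_le_one hsmall).trans hlog
  · obtain ⟨⟨i₀, j₀, hj₀, hK⟩, -⟩ := firstExp_spec (exists_mem_expSet_lt_two_pow n) m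
    have hlog := le_two_mul_log_of_two_pow_le (N := n * (i₀ + 1) ^ 2) (x := 2 + m)
      (by exact_mod_cast (two_pow_le_add_two hn hlarge.le hK).trans_eq (add_comm m 2))
    push_cast at hlog
    calc n * ∑ l ∈ range (m + 1), aSeq n l ≤ n * ((i₀ + 1) ^ 2 : ℝ) := by
          gcongr
          exact sum_aSeq_le_sq hn hj₀ hK
      _ ≤ 2 * Real.log (2 + m) := hlog
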